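/- Let λ < 0 and set α_n = (1+λ²)^{-1/2} (2 log n)^{-1/2} and β_n = (2 log n / (1+λ²))^{1/2} - (log log n + log(-2πλ)) / ((1+λ²)^{1/2} (2 log n)^{1/2}) for n ≥ 2. Then for every real x, (F_λ(α_n x + β_n))^n → Λ(x) as n → ∞. -/

import Mathlib

open Real MeasureTheory Filter Topology

/-- Standard normal density. -/
noncomputable def stdPhi (x : ℝ) : ℝ := (Real.sqrt (2 * Real.pi))⁻¹ * Real.exp (-(x ^ 2) / 2)

/-- Standard normal cdf. -/
noncomputable def stdCdf (x : ℝ) : ℝ := ∫ t in Set.Iic x, stdPhi t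

/-- Skew normal density with shape parameter l. -/
noncomputable def snPdf (l x : ℝ) : ℝ := 2 * stdPhi x * stdCdf (l * x)

/-- Skew normal cdf with shape parameter l. -/
noncomputable def snCdf (l x : ℝ) : ℝ := ∫ t in Set.Iic x, snPdf l t

/-- Gumbel extreme value distribution function. -/
noncomputable def gumbel (x : ℝ) : ℝ := Real.exp (-Real.exp (-x))


/-!
Write `λ = -m` with `m > 0`. Both Mills bounds `s/(1+s²) φ(s) ≤ Φ(-s) ≤ φ(s)/s`, and the
tail estimates for the skew normal density, come from the single exact integral
`∫_u^∞ (t^k + (1-k)/a t^(k-2)) e^{-at²/2} dt = u^(k-1) e^{-au²/2}/a` (`k ≤ 1`). Since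
`2φ(t)φ(mt) = e^{-(1+m²)t²/2}/π`, they give `f_λ(t) ~ e^{-(1+m²)t²/2}/(πmt)` and hence
`1 - F_λ(u) ~ e^{-(1+m²)u²/2}/(πm(1+m²)u²)` as `u → ∞`. For `u = α_n x + β_n` and
`T = log n` this approximation equals `e^{-x}/n` up to a factor `1 + o(1)`, because
`α_n x + β_n` is chosen so that `(1+m²)u²/2 = T + x - log T - log(2πm) + o(1)`. Hence
`n (1 - F_λ(u_n)) → e^{-x}` and `F_λ(u_n)^n → exp(-e^{-x})`.
-/

open Set Asymptotics

section GaussianTail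

variable {a u : ℝ} {k : ℤ}

lemma tendsto_exp_neg_mul_sq_div_two (ha : 0 < a) :
    Tendsto (fun t : ℝ => exp (-(a * t ^ 2) / 2)) atTop (𝓝 0) :=
  tendsto_exp_atBot.comp <| (tendsto_neg_atBot_iff.2 <|
    (tendsto_pow_atTop two_ne_zero).const_mul_atTop ha).atBot_div_const two_pos

lemma hasDerivAt_zpow_mul_exp_neg_mul_sq {t : ℝ} (ha : 0 < a) (ht : 0 < t) :
    HasDerivAt (fun t : ℝ => -(t ^ (k - 1) * exp (-(a * t ^ 2) / 2)) / a)
      ((t ^ k + (1 - k) / a * t ^ (k - 2)) * exp (-(a * t ^ 2) / 2)) t := by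
  have hexp : HasDerivAt (fun t : ℝ => exp (-(a * t ^ 2) / 2))
      (exp (-(a * t ^ 2) / 2) * (-(a * t))) t := by
    have hsq : HasDerivAt (fun t : ℝ => -(a * t ^ 2) / 2) (-(a * t)) t := by
      refine (((hasDerivAt_pow 2 t).const_mul a).neg.div_const 2).congr_deriv ?_
      push_cast; ring
    exact hsq.exp
  refine (((hasDerivAt_zpow (k - 1) t (Or.inl ht.ne')).mul hexp).neg.div_const a).congr_deriv ?_
  rw [show k - 1 - 1 = k - 2 by ring, zpow_sub_one₀ ht.ne']
  push_cast
  field_simp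
  ring

lemma tendsto_zpow_mul_exp_neg_mul_sq (ha : 0 < a) (hk : k ≤ 1) :
    Tendsto (fun t : ℝ => -(t ^ (k - 1) * exp (-(a * t ^ 2) / 2)) / a) atTop (𝓝 0) := by
  have hbound : Tendsto (fun t : ℝ => t ^ (k - 1) * exp (-(a * t ^ 2) / 2)) atTop (𝓝 0) := by
    refine tendsto_of_tendsto_of_tendsto_of_le_of_le' tendsto_const_nhds
      (tendsto_exp_neg_mul_sq_div_two ha) ?_ ?_
    · filter_upwards [eventually_gt_atTop 0] with t ht
      positivity
    · filter_upwards [eventually_ge_atTop 1] with t ht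
      exact mul_le_of_le_one_left (exp_pos _).le (zpow_le_one_of_nonpos₀ ht (by omega))
  simpa using hbound.neg.div_const a

lemma integral_Ioi_zpow_add_mul_exp_neg_mul_sq (ha : 0 < a) (hu : 0 < u) (hk : k ≤ 1) :
    IntegrableOn (fun t => (t ^ k + (1 - k) / a * t ^ (k - 2)) * exp (-(a * t ^ 2) / 2))
        (Ioi u) ∧
      ∫ t in Ioi u, (t ^ k + (1 - k) / a * t ^ (k - 2)) * exp (-(a * t ^ 2) / 2) =
        u ^ (k - 1) * exp (-(a * u ^ 2) / 2) / a := by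
  have hderiv := fun t (ht : t ∈ Ici u) =>
    hasDerivAt_zpow_mul_exp_neg_mul_sq (k := k) ha (hu.trans_le ht)
  have hnonneg :
      ∀ t ∈ Ioi u, 0 ≤ (t ^ k + (1 - k) / a * t ^ (k - 2)) * exp (-(a * t ^ 2) / 2) := by
    intro t ht
    have hk' : 0 ≤ ((1 : ℝ) - k) := by exact_mod_cast sub_nonneg.2 hk
    have ht0 : 0 < t := hu.trans ht
    positivity
  have hlim := tendsto_zpow_mul_exp_neg_mul_sq ha hk
  refine ⟨integrableOn_Ioi_deriv_of_nonneg' hderiv hnonneg hlim, ?_⟩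
  rw [integral_Ioi_of_hasDerivAt_of_nonneg' hderiv hnonneg hlim]
  ring

lemma integrableOn_Ioi_zpow_mul_exp_neg_mul_sq (ha : 0 < a) (hu : 0 < u) (hk : k ≤ 1) :
    IntegrableOn (fun t => t ^ k * exp (-(a * t ^ 2) / 2)) (Ioi u) := by
  have hcont : ContinuousOn (fun t : ℝ => t ^ k * exp (-(a * t ^ 2) / 2)) (Ioi u) :=
    (continuousOn_id.zpow₀ k fun t ht => Or.inl (hu.trans ht).ne').mul (by fun_prop)
  refine (integral_Ioi_zpow_add_mul_exp_neg_mul_sq ha hu hk).1.mono'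
    (hcont.aestronglyMeasurable measurableSet_Ioi) (ae_restrict_of_forall_mem measurableSet_Ioi ?_)
  intro t ht
  have ht0 : 0 < t := hu.trans ht
  have hk' : 0 ≤ ((1 : ℝ) - k) := by exact_mod_cast sub_nonneg.2 hk
  rw [norm_of_nonneg (by positivity)]
  gcongr
  exact le_add_of_nonneg_right (by positivity)

lemma integral_Ioi_zpow_mul_exp_neg_mul_sq_le (ha : 0 < a) (hu : 0 < u) (hk : k ≤ 1) :
    ∫ t in Ioi u, t ^ k * exp (-(a * t ^ 2) / 2) ≤
      u ^ (k - 1) * exp (-(a * u ^ 2) / 2) / a := by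
  obtain ⟨hint, heq⟩ := integral_Ioi_zpow_add_mul_exp_neg_mul_sq ha hu hk
  rw [← heq]
  refine setIntegral_mono_on (integrableOn_Ioi_zpow_mul_exp_neg_mul_sq ha hu hk) hint
    measurableSet_Ioi fun t ht => ?_
  have ht0 : 0 < t := hu.trans ht
  have hk' : 0 ≤ ((1 : ℝ) - k) := by exact_mod_cast sub_nonneg.2 hk
  gcongr
  exact le_add_of_nonneg_right (by positivity)

lemma le_integral_Ioi_zpow_mul_exp_neg_mul_sq (ha : 0 < a) (hu : 0 < u) (hk : k ≤ 1) :
    (1 + (1 - k) / (a * u ^ 2))⁻¹ * (u ^ (k - 1) * exp (-(a * u ^ 2) / 2) / a) ≤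
      ∫ t in Ioi u, t ^ k * exp (-(a * t ^ 2) / 2) := by
  obtain ⟨hint, heq⟩ := integral_Ioi_zpow_add_mul_exp_neg_mul_sq ha hu hk
  have hk' : 0 ≤ ((1 : ℝ) - k) := by exact_mod_cast sub_nonneg.2 hk
  rw [inv_mul_le_iff₀ (by positivity), ← heq, ← integral_const_mul]
  refine setIntegral_mono_on hint
    ((integrableOn_Ioi_zpow_mul_exp_neg_mul_sq ha hu hk).const_mul _) measurableSet_Ioi
    fun t ht => ?_
  have ht0 : 0 < t := hu.trans ht
  have hcorr : (1 - k) / a * t ^ (k - 2) ≤ (1 - k) / (a * u ^ 2) * t ^ k := by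
    calc (1 - k) / a * t ^ (k - 2) = (1 - k) / a * t ^ k * (t ^ 2)⁻¹ := by
          rw [zpow_sub₀ ht0.ne', div_eq_mul_inv, mul_assoc]; norm_cast; ring
      _ ≤ (1 - k) / a * t ^ k * (u ^ 2)⁻¹ := by gcongr; exact le_of_lt ht
      _ = (1 - k) / (a * u ^ 2) * t ^ k := by field_simp
  rw [← mul_assoc]
  gcongr
  linarith

end GaussianTail

lemma stdPhi_eq_gaussianPDFReal : stdPhi = ProbabilityTheory.gaussianPDFReal 0 1 := by
  ext x
  simp [stdPhi, ProbabilityTheory.gaussianPDFReal]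

lemma stdPhi_nonneg (x : ℝ) : 0 ≤ stdPhi x := by
  rw [stdPhi_eq_gaussianPDFReal]; exact ProbabilityTheory.gaussianPDFReal_nonneg _ _ _

lemma stdPhi_neg (x : ℝ) : stdPhi (-x) = stdPhi x := by simp [stdPhi]

lemma integrable_stdPhi : Integrable stdPhi := by
  rw [stdPhi_eq_gaussianPDFReal]; exact ProbabilityTheory.integrable_gaussianPDFReal _ _

lemma integral_stdPhi : ∫ x, stdPhi x = 1 := by
  rw [stdPhi_eq_gaussianPDFReal]
  exact ProbabilityTheory.integral_gaussianPDFReal_eq_one _ one_ne_zero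

lemma stdCdf_nonneg (x : ℝ) : 0 ≤ stdCdf x :=
  setIntegral_nonneg measurableSet_Iic fun t _ => stdPhi_nonneg t

lemma stdCdf_le_one (x : ℝ) : stdCdf x ≤ 1 :=
  integral_stdPhi ▸ setIntegral_le_integral integrable_stdPhi (.of_forall stdPhi_nonneg)

lemma monotone_stdCdf : Monotone stdCdf := fun _ _ hxy =>
  setIntegral_mono_set integrable_stdPhi.integrableOn (.of_forall stdPhi_nonneg)
    (Iic_subset_Iic.2 hxy).eventuallyLE

lemma stdCdf_neg (s : ℝ) : stdCdf (-s) = ∫ t in Ioi s, stdPhi t := by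
  rw [stdCdf, ← integral_comp_neg_Ioi]
  simp only [stdPhi_neg]

lemma stdCdf_add_stdCdf_neg (s : ℝ) : stdCdf s + stdCdf (-s) = 1 := by
  rw [stdCdf_neg, stdCdf, ← integral_stdPhi]
  exact intervalIntegral.integral_Iic_add_Ioi integrable_stdPhi.integrableOn
    integrable_stdPhi.integrableOn

lemma stdCdf_neg_eq_integral (s : ℝ) :
    stdCdf (-s) = (√(2 * π))⁻¹ * ∫ t in Ioi s, t ^ (0 : ℤ) * exp (-(1 * t ^ 2) / 2) := by
  rw [stdCdf_neg, ← integral_const_mul]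
  simp [stdPhi]

lemma stdPhi_div_eq (s : ℝ) :
    stdPhi s / s = (√(2 * π))⁻¹ * (s ^ ((0 : ℤ) - 1) * exp (-(1 * s ^ 2) / 2) / 1) := by
  simp [stdPhi, div_eq_mul_inv]
  ring

lemma stdCdf_neg_le (s : ℝ) (hs : 0 < s) : stdCdf (-s) ≤ stdPhi s / s := by
  rw [stdCdf_neg_eq_integral, stdPhi_div_eq]
  gcongr
  exact integral_Ioi_zpow_mul_exp_neg_mul_sq_le one_pos hs zero_le_one

lemma le_stdCdf_neg (s : ℝ) (hs : 0 < s) :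
    (1 + 1 / s ^ 2)⁻¹ * (stdPhi s / s) ≤ stdCdf (-s) := by
  have := le_integral_Ioi_zpow_mul_exp_neg_mul_sq one_pos hs (k := 0) zero_le_one
  rw [stdCdf_neg_eq_integral, stdPhi_div_eq, mul_left_comm]
  gcongr
  simpa using this

lemma snPdf_nonneg (l x : ℝ) : 0 ≤ snPdf l x :=
  mul_nonneg (mul_nonneg zero_le_two (stdPhi_nonneg x)) (stdCdf_nonneg _)

lemma integrable_snPdf (l : ℝ) : Integrable (snPdf l) := by
  have hmeas : Measurable (snPdf l) := by
    refine (measurable_const.mul ?_).mul (monotone_stdCdf.measurable.comp (measurable_const_mul l))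
    rw [stdPhi_eq_gaussianPDFReal]
    exact ProbabilityTheory.measurable_gaussianPDFReal _ _
  refine (integrable_stdPhi.const_mul 2).mono' hmeas.aestronglyMeasurable (.of_forall fun x => ?_)
  rw [norm_of_nonneg (snPdf_nonneg l x), snPdf]
  exact mul_le_of_le_one_right (by linarith [stdPhi_nonneg x]) (stdCdf_le_one _)

lemma snPdf_add_snPdf_neg (l x : ℝ) : snPdf l x + snPdf (-l) x = 2 * stdPhi x := by
  rw [snPdf, snPdf, neg_mul, ← mul_add, stdCdf_add_stdCdf_neg, mul_one]

lemma integral_snPdf (l : ℝ) : ∫ x, snPdf l x = 1 := by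
  have hrefl : ∫ x, snPdf (-l) x = ∫ x, snPdf l x := by
    rw [← integral_neg_eq_self]
    simp [snPdf, stdPhi_neg]
  have hsum := integral_add (integrable_snPdf l) (integrable_snPdf (-l))
  simp only [snPdf_add_snPdf_neg, integral_const_mul, integral_stdPhi, hrefl] at hsum
  linarith

lemma snCdf_eq_one_sub_integral_Ioi (l u : ℝ) : snCdf l u = 1 - ∫ t in Ioi u, snPdf l t := by
  rw [eq_sub_iff_add_eq, snCdf, ← integral_snPdf l]
  exact intervalIntegral.integral_Iic_add_Ioi (integrable_snPdf l).integrableOn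
    (integrable_snPdf l).integrableOn

lemma two_mul_stdPhi_mul_stdPhi_div (m t : ℝ) :
    2 * stdPhi t * (stdPhi (m * t) / (m * t)) =
      (π * m)⁻¹ * (t ^ (-1 : ℤ) * exp (-((1 + m ^ 2) * t ^ 2) / 2)) := by
  have hsq : (√(2 * π))⁻¹ * (√(2 * π))⁻¹ = (2 * π)⁻¹ := by
    rw [← mul_inv, mul_self_sqrt (by positivity)]
  have hexp : exp (-(t ^ 2) / 2) * exp (-((m * t) ^ 2) / 2) = exp (-((1 + m ^ 2) * t ^ 2) / 2) := by
    rw [← exp_add]; ring_nf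
  calc 2 * stdPhi t * (stdPhi (m * t) / (m * t))
      = 2 * ((√(2 * π))⁻¹ * (√(2 * π))⁻¹) *
          (exp (-(t ^ 2) / 2) * exp (-((m * t) ^ 2) / 2)) / (m * t) := by
        simp only [stdPhi]; ring
    _ = _ := by
        rw [hsq, hexp, zpow_neg_one]
        field_simp

lemma snPdf_neg_eq (m t : ℝ) : snPdf (-m) t = 2 * stdPhi t * stdCdf (-(m * t)) := by
  rw [snPdf, neg_mul]

noncomputable def snTailApprox (m u : ℝ) : ℝ :=
  exp (-((1 + m ^ 2) * u ^ 2) / 2) / (π * m * (1 + m ^ 2) * u ^ 2)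

lemma inv_mul_zpow_mul_exp_eq_snTailApprox (m u : ℝ) :
    (π * m)⁻¹ * (u ^ ((-1 : ℤ) - 1) * exp (-((1 + m ^ 2) * u ^ 2) / 2) / (1 + m ^ 2)) =
      snTailApprox m u := by
  rw [snTailApprox, show (-1 : ℤ) - 1 = -2 by norm_num, zpow_neg, zpow_two]
  field_simp

section NegativeShape

variable {m u : ℝ}

lemma snPdf_neg_le (hm : 0 < m) {t : ℝ} (ht : 0 < t) :
    snPdf (-m) t ≤ (π * m)⁻¹ * (t ^ (-1 : ℤ) * exp (-((1 + m ^ 2) * t ^ 2) / 2)) := by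
  rw [snPdf_neg_eq, ← two_mul_stdPhi_mul_stdPhi_div]
  have := stdPhi_nonneg t
  gcongr
  exact stdCdf_neg_le _ (by positivity)

lemma le_snPdf_neg (hm : 0 < m) {t : ℝ} (ht : 0 < t) :
    (1 + 1 / (m * t) ^ 2)⁻¹ *
        ((π * m)⁻¹ * (t ^ (-1 : ℤ) * exp (-((1 + m ^ 2) * t ^ 2) / 2))) ≤ snPdf (-m) t := by
  rw [snPdf_neg_eq, ← two_mul_stdPhi_mul_stdPhi_div, mul_left_comm]
  have := stdPhi_nonneg t
  gcongr
  exact le_stdCdf_neg _ (by positivity)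

lemma snTailApprox_pos (hm : 0 < m) (hu : 0 < u) : 0 < snTailApprox m u := by
  unfold snTailApprox; positivity

lemma integral_Ioi_snPdf_neg_le (hm : 0 < m) (hu : 0 < u) :
    ∫ t in Ioi u, snPdf (-m) t ≤ snTailApprox m u := by
  have ha : 0 < 1 + m ^ 2 := by positivity
  calc ∫ t in Ioi u, snPdf (-m) t
      ≤ ∫ t in Ioi u, (π * m)⁻¹ * (t ^ (-1 : ℤ) * exp (-((1 + m ^ 2) * t ^ 2) / 2)) :=
        setIntegral_mono_on (integrable_snPdf _).integrableOn
          ((integrableOn_Ioi_zpow_mul_exp_neg_mul_sq ha hu (by norm_num)).const_mul _)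
          measurableSet_Ioi fun t ht => snPdf_neg_le hm (hu.trans ht)
    _ ≤ (π * m)⁻¹ *
          (u ^ ((-1 : ℤ) - 1) * exp (-((1 + m ^ 2) * u ^ 2) / 2) / (1 + m ^ 2)) := by
        rw [integral_const_mul]
        gcongr
        exact integral_Ioi_zpow_mul_exp_neg_mul_sq_le ha hu (by norm_num)
    _ = snTailApprox m u := inv_mul_zpow_mul_exp_eq_snTailApprox m u

lemma le_integral_Ioi_snPdf_neg (hm : 0 < m) (hu : 0 < u) :
    (1 + 1 / (m * u) ^ 2)⁻¹ * (1 + 2 / ((1 + m ^ 2) * u ^ 2))⁻¹ * snTailApprox m u ≤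
      ∫ t in Ioi u, snPdf (-m) t := by
  have ha : 0 < 1 + m ^ 2 := by positivity
  calc (1 + 1 / (m * u) ^ 2)⁻¹ * (1 + 2 / ((1 + m ^ 2) * u ^ 2))⁻¹ * snTailApprox m u
      = (1 + 1 / (m * u) ^ 2)⁻¹ * (π * m)⁻¹ *
          ((1 + (1 - (-1 : ℤ)) / ((1 + m ^ 2) * u ^ 2))⁻¹ *
            (u ^ ((-1 : ℤ) - 1) * exp (-((1 + m ^ 2) * u ^ 2) / 2) / (1 + m ^ 2))) := by
        rw [← inv_mul_zpow_mul_exp_eq_snTailApprox]; push_cast; ring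
    _ ≤ (1 + 1 / (m * u) ^ 2)⁻¹ * (π * m)⁻¹ *
          ∫ t in Ioi u, t ^ (-1 : ℤ) * exp (-((1 + m ^ 2) * t ^ 2) / 2) := by
        gcongr
        exact le_integral_Ioi_zpow_mul_exp_neg_mul_sq ha hu (by norm_num)
    _ = ∫ t in Ioi u, (1 + 1 / (m * u) ^ 2)⁻¹ *
          ((π * m)⁻¹ * (t ^ (-1 : ℤ) * exp (-((1 + m ^ 2) * t ^ 2) / 2))) := by
        rw [integral_const_mul, integral_const_mul, mul_assoc]
    _ ≤ ∫ t in Ioi u, snPdf (-m) t := by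
        refine setIntegral_mono_on
          (((integrableOn_Ioi_zpow_mul_exp_neg_mul_sq ha hu (by norm_num)).const_mul _).const_mul _)
          (integrable_snPdf _).integrableOn measurableSet_Ioi fun t ht => ?_
        have ht0 : 0 < t := hu.trans ht
        refine le_trans ?_ (le_snPdf_neg hm ht0)
        have : 0 ≤ (π * m)⁻¹ * (t ^ (-1 : ℤ) * exp (-((1 + m ^ 2) * t ^ 2) / 2)) := by
          positivity
        gcongr
        exact le_of_lt ht

lemma isEquivalent_integral_Ioi_snPdf_neg (hm : 0 < m) :
    (fun u => ∫ t in Ioi u, snPdf (-m) t) ~[atTop] snTailApprox m := by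
  have hsq : Tendsto (fun u : ℝ => u ^ 2) atTop atTop := tendsto_pow_atTop two_ne_zero
  have hcorr : Tendsto
      (fun u : ℝ => (1 + 1 / (m * u) ^ 2)⁻¹ * (1 + 2 / ((1 + m ^ 2) * u ^ 2))⁻¹)
      atTop (𝓝 1) := by
    have h1 : Tendsto (fun u : ℝ => 1 / (m * u) ^ 2) atTop (𝓝 0) :=
      tendsto_const_nhds.div_atTop ((tendsto_pow_atTop two_ne_zero).comp
        (tendsto_id.const_mul_atTop hm))
    have h2 : Tendsto (fun u : ℝ => 2 / ((1 + m ^ 2) * u ^ 2)) atTop (𝓝 0) :=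
      tendsto_const_nhds.div_atTop (hsq.const_mul_atTop (by positivity))
    simpa using (((tendsto_const_nhds (x := (1 : ℝ))).add h1).inv₀ (by norm_num)).mul
      (((tendsto_const_nhds (x := (1 : ℝ))).add h2).inv₀ (by norm_num))
  refine isEquivalent_of_tendsto_one
    (tendsto_of_tendsto_of_tendsto_of_le_of_le' hcorr tendsto_const_nhds ?_ ?_)
  · filter_upwards [eventually_gt_atTop 0] with u hu
    rw [Pi.div_apply, le_div_iff₀ (snTailApprox_pos hm hu)]
    exact le_integral_Ioi_snPdf_neg hm hu
  · filter_upwards [eventually_gt_atTop 0] with u hu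
    rw [Pi.div_apply, div_le_one (snTailApprox_pos hm hu)]
    exact integral_Ioi_snPdf_neg_le hm hu

end NegativeShape

noncomputable def levelShift (m x T : ℝ) : ℝ := x - log T - log (2 * π * m)

/-- `α_n x + β_n` for `λ = -m`, as a function of `T = log n` (see `snLevel_eq`). -/
noncomputable def snLevel (m x T : ℝ) : ℝ :=
  (2 * T + levelShift m x T) / (√(1 + m ^ 2) * √(2 * T))

lemma tendsto_levelShift_pow_div (m x : ℝ) (n : ℕ) :
    Tendsto (fun T => levelShift m x T ^ n / T) atTop (𝓝 0) := by
  have hconst : (fun _ : ℝ => x - log (2 * π * m)) =o[atTop] log :=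
    isLittleO_const_left.2 (Or.inr (tendsto_norm_atTop_atTop.comp tendsto_log_atTop))
  have hshift : (fun T => levelShift m x T) =O[atTop] log := by
    refine (hconst.isBigO.sub (isBigO_refl log atTop)).congr_left fun T => ?_
    simp only [levelShift]; ring
  exact ((hshift.pow n).trans_isLittleO isLittleO_pow_log_id_atTop).tendsto_div_nhds_zero

lemma tendsto_snLevel_atTop (m x : ℝ) : Tendsto (snLevel m x) atTop atTop := by
  have hratio : Tendsto (fun T => (1 + levelShift m x T / T / 2) / √(1 + m ^ 2)) atTop
      (𝓝 (1 / √(1 + m ^ 2))) := by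
    simpa using (((tendsto_levelShift_pow_div m x 1).div_const 2).const_add 1).div_const
      (√(1 + m ^ 2))
  refine ((tendsto_sqrt_atTop.comp (tendsto_id.const_mul_atTop two_pos)).atTop_mul_pos
    (by positivity) hratio).congr' ?_
  filter_upwards [eventually_gt_atTop 0] with T hT
  have hs : √(2 * T) ^ 2 = 2 * T := sq_sqrt (by positivity)
  simp only [Function.comp, id, snLevel]
  field_simp
  linear_combination (2 * T + levelShift m x T) * hs

lemma exp_mul_snTailApprox_snLevel {m : ℝ} (hm : 0 < m) (x : ℝ) {T : ℝ} (hT : 0 < T) :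
    exp T * snTailApprox m (snLevel m x T) =
      exp (-x) * exp (-(levelShift m x T ^ 2 / (4 * T))) /
        (1 + levelShift m x T / (2 * T)) ^ 2 := by
  set c := levelShift m x T with hc
  have ha : 0 < 1 + m ^ 2 := by positivity
  have hsq : (1 + m ^ 2) * snLevel m x T ^ 2 = (2 * T + c) ^ 2 / (2 * T) := by
    rw [snLevel, ← hc, div_pow, mul_pow, sq_sqrt ha.le, sq_sqrt (by positivity)]
    field_simp
  have hshift_exp : exp (-c) = exp (-x) * (T * (2 * π * m)) := by
    rw [hc, levelShift, show -(x - log T - log (2 * π * m)) = -x + log (T * (2 * π * m)) by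
      rw [log_mul hT.ne' (by positivity)]; ring, exp_add, exp_log (by positivity)]
  have hexp : exp T * exp (-((1 + m ^ 2) * snLevel m x T ^ 2) / 2) =
      exp (-c) * exp (-(c ^ 2 / (4 * T))) := by
    rw [hsq, ← exp_add, ← exp_add]
    congr 1
    field_simp
    ring
  rw [snTailApprox, mul_assoc (π * m), ← mul_div_assoc, hexp, hsq, hshift_exp]
  field_simp

lemma tendsto_exp_mul_snTailApprox_snLevel {m : ℝ} (hm : 0 < m) (x : ℝ) :
    Tendsto (fun T => exp T * snTailApprox m (snLevel m x T)) atTop (𝓝 (exp (-x))) := by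
  have h1 : Tendsto (fun T => levelShift m x T / (2 * T)) atTop (𝓝 0) := by
    simpa [div_div, mul_comm] using (tendsto_levelShift_pow_div m x 1).div_const 2
  have h2 : Tendsto (fun T => levelShift m x T ^ 2 / (4 * T)) atTop (𝓝 0) := by
    simpa [div_div, mul_comm] using (tendsto_levelShift_pow_div m x 2).div_const 4
  have hlim : Tendsto (fun T => exp (-x) * exp (-(levelShift m x T ^ 2 / (4 * T))) /
      (1 + levelShift m x T / (2 * T)) ^ 2) atTop (𝓝 (exp (-x))) := by
    simpa [Pi.div_def] using ((tendsto_const_nhds (x := exp (-x))).mul h2.neg.rexp).div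
      (((tendsto_const_nhds (x := (1 : ℝ))).add h1).pow 2) (by norm_num)
  refine hlim.congr' ?_
  filter_upwards [eventually_gt_atTop 0] with T hT
  exact (exp_mul_snTailApprox_snLevel hm x hT).symm

lemma snLevel_eq (m x : ℝ) {T : ℝ} (hT : 0 < T) :
    (√(1 + m ^ 2))⁻¹ * (√(2 * T))⁻¹ * x +
        (√(2 * T / (1 + m ^ 2)) - (log T + log (2 * π * m)) / (√(1 + m ^ 2) * √(2 * T))) =
      snLevel m x T := by
  have hs : √(2 * T) ^ 2 = 2 * T := sq_sqrt (by positivity)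
  rw [snLevel, levelShift, sqrt_div (by positivity)]
  field_simp
  linear_combination hs

theorem skew_normal_max_gumbel_neg (l : ℝ) (hl : l < 0) (x : ℝ) :
    Tendsto (fun n : ℕ =>
      (snCdf l ((Real.sqrt (1 + l ^ 2))⁻¹ * (Real.sqrt (2 * Real.log n))⁻¹ * x +
        (Real.sqrt (2 * Real.log n / (1 + l ^ 2)) -
          (Real.log (Real.log n) + Real.log (-2 * Real.pi * l)) /
            (Real.sqrt (1 + l ^ 2) * Real.sqrt (2 * Real.log n))))) ^ n) atTop
      (𝓝 (gumbel x)) := by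
  obtain ⟨m, hm, rfl⟩ : ∃ m, 0 < m ∧ l = -m := ⟨-l, neg_pos.2 hl, (neg_neg l).symm⟩
  have hlog : Tendsto (fun n : ℕ => log n) atTop atTop :=
    tendsto_log_atTop.comp tendsto_natCast_atTop_atTop
  set v : ℕ → ℝ := fun n => snLevel m x (log n)
  have hv : Tendsto v atTop atTop := (tendsto_snLevel_atTop m x).comp hlog
  have happrox :
      Tendsto (fun n : ℕ => (n : ℝ) * snTailApprox m (v n)) atTop (𝓝 (exp (-x))) := by
    refine ((tendsto_exp_mul_snTailApprox_snLevel hm x).comp hlog).congr' ?_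
    filter_upwards [eventually_gt_atTop 0] with n hn
    simp [v, exp_log (Nat.cast_pos.2 hn)]
  have htail : Tendsto (fun n : ℕ => (n : ℝ) * ∫ t in Ioi (v n), snPdf (-m) t) atTop
      (𝓝 (exp (-x))) :=
    ((IsEquivalent.refl (u := fun n : ℕ => (n : ℝ))).mul
      ((isEquivalent_integral_Ioi_snPdf_neg hm).comp_tendsto hv)).tendsto_nhds_iff.2 happrox
  refine (tendsto_one_add_pow_exp_of_tendsto
    (g := fun n => -∫ t in Ioi (v n), snPdf (-m) t) (by simpa using htail.neg)).congr' ?_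
  filter_upwards [eventually_gt_atTop 1] with n hn
  rw [neg_sq, show -2 * π * -m = 2 * π * m by ring,
    snLevel_eq m x (log_pos (by exact_mod_cast hn)), snCdf_eq_one_sub_integral_Ioi, sub_eq_add_neg]
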